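/- arXiv:gr-qc/9811084 — 2 statements merged into one kernel-verified Lean document; each statement's English description precedes it below -/
import Mathlib

section
/- For the quasi-conformal coframe, the off-diagonal spatial entries of the leading matrix are L_{ij} = (β₁ − β₂)e^{−2f}φ_{ij} for i ≠ j, and all time–space entries L_{0i}, L_{i0} vanish. In particular, if β₁ = β₂ then L_{ab} is diagonal and equals −e^{−2f}·Δ̃φ·diag(β₁−β₄, β₁+β₄, β₁+β₄, β₁+β₄) at every point. -/
/-!
Write `C^a_{mn} = e^{-f} P^a_{mn}(∂f)`, where `P^a_{mn}` (`cobPattern`) is a fixed index pattern,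
linear in the vector it is applied to. The product rule then gives
`B^a_{mnp} = e^{-2f} P^a_{mn}(φ_{p·})`, with `φ` extended by zero to the time index (`phi4`),
and the contractions become index algebra:
`⁽¹⁾B_{ab} = e^{-2f}(φ_{ab} − δ_{ab}Δ̃φ)`, `⁽²⁾B_{ab} = −e^{-2f}φ_{ab}`, `B = e^{-2f}Δ̃φ`, and
`⁽³⁾B_{ab} = 0` because `φ` is symmetric (equality of mixed partials). Hence
`L_{ab} = e^{-2f}((β₁ − β₂)φ_{ab} + (β₄η_{ab} − β₁δ_{ab})Δ̃φ)`.
-/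

open scoped BigOperators

noncomputable section

/-- Partial derivative along coordinate `i` on `ℝ³`. -/
def pd (i : Fin 3) (f : (Fin 3 → ℝ) → ℝ) : (Fin 3 → ℝ) → ℝ :=
  fun x => fderiv ℝ f x (Pi.single i 1)

/-- Partial derivative indexed by a 4-index: zero for the time index `0`. -/
def pd4 (f : (Fin 3 → ℝ) → ℝ) (p : Fin 4) : (Fin 3 → ℝ) → ℝ :=
  if h : p = 0 then 0 else pd (p.pred h) f

/-- Signs of the Minkowski metric `η = diag(1,−1,−1,−1)`. -/
def epsM (a : Fin 4) : ℝ := if a = 0 then 1 else -1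

/-- The Minkowski metric `η = diag(1,−1,−1,−1)`. -/
def etaM (a b : Fin 4) : ℝ := if a = b then epsM a else 0

/-- Anholonomity objects `C^a_{mn}` of the quasi-conformal coframe
`ϑ⁰ = e^{−f}dt`, `ϑⁱ = e^{f}dxⁱ`:  `C⁰_{0i} = e^{−f}fᵢ`, `C^i_{ij} = −e^{−f}fⱼ`
(spatial `i ≠ j`), antisymmetric in the lower pair, all other components zero. -/
def Cob (f : (Fin 3 → ℝ) → ℝ) (a m n : Fin 4) : (Fin 3 → ℝ) → ℝ := fun x =>
  if a = 0 then
    Real.exp (-f x) * ((if m = 0 then pd4 f n x else 0) - (if n = 0 then pd4 f m x else 0))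
  else
    Real.exp (-f x) * ((if n = a then pd4 f m x else 0) - (if m = a then pd4 f n x else 0))

/-- The contraction `C_a := C^m_{am}`. -/
def Cone (f : (Fin 3 → ℝ) → ℝ) (a : Fin 4) : (Fin 3 → ℝ) → ℝ :=
  fun x => ∑ m : Fin 4, Cob f m a m x

/-- The B-objects `B^a_{mn0} := 0`, `B^a_{mnp} := e^{−f} ∂_p C^a_{mn}` for `p = 1,2,3`. -/
def Bob (f : (Fin 3 → ℝ) → ℝ) (a m n p : Fin 4) : (Fin 3 → ℝ) → ℝ :=
  fun x => Real.exp (-f x) * pd4 (Cob f a m n) p x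

/-- `⁽¹⁾B_{ab} := B_{abm}{}^m` (indices moved with `η`). -/
def B1 (f : (Fin 3 → ℝ) → ℝ) (a b : Fin 4) : (Fin 3 → ℝ) → ℝ :=
  fun x => epsM a * ∑ m : Fin 4, epsM m * Bob f a b m m x

/-- `⁽²⁾B_{ab} := B^m{}_{mab}`. -/
def B2 (f : (Fin 3 → ℝ) → ℝ) (a b : Fin 4) : (Fin 3 → ℝ) → ℝ :=
  fun x => ∑ m : Fin 4, Bob f m m a b x

/-- `⁽³⁾B_{ab} := B^m{}_{abm}`. -/
def B3 (f : (Fin 3 → ℝ) → ℝ) (a b : Fin 4) : (Fin 3 → ℝ) → ℝ :=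
  fun x => ∑ m : Fin 4, Bob f m a b m x

/-- The scalar B-object `B := η^{ab}⁽¹⁾B_{ab}`. -/
def Bscalar (f : (Fin 3 → ℝ) → ℝ) : (Fin 3 → ℝ) → ℝ :=
  fun x => ∑ a : Fin 4, epsM a * B1 f a a x

/-- `⁽¹⁾A_{ab} := C_{abm}C^m`. -/
def A1 (f : (Fin 3 → ℝ) → ℝ) (a b : Fin 4) : (Fin 3 → ℝ) → ℝ :=
  fun x => epsM a * ∑ m : Fin 4, epsM m * Cob f a b m x * Cone f m x

/-- `⁽²⁾A_{ab} := C_{mab}C^m`. -/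
def A2 (f : (Fin 3 → ℝ) → ℝ) (a b : Fin 4) : (Fin 3 → ℝ) → ℝ :=
  fun x => ∑ m : Fin 4, Cob f m a b x * Cone f m x

/-- `⁽³⁾A_{ab} := C_{amn}C_b{}^{mn}`. -/
def A3 (f : (Fin 3 → ℝ) → ℝ) (a b : Fin 4) : (Fin 3 → ℝ) → ℝ :=
  fun x => epsM a * epsM b *
    ∑ m : Fin 4, ∑ n : Fin 4, epsM m * epsM n * Cob f a m n x * Cob f b m n x

/-- `⁽⁴⁾A_{ab} := C_{amn}C^m{}_b{}^n`. -/
def A4 (f : (Fin 3 → ℝ) → ℝ) (a b : Fin 4) : (Fin 3 → ℝ) → ℝ :=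
  fun x => epsM a * ∑ m : Fin 4, ∑ n : Fin 4, epsM n * Cob f a m n x * Cob f m b n x

/-- `⁽⁵⁾A_{ab} := C_{man}C^n{}_b{}^m`. -/
def A5 (f : (Fin 3 → ℝ) → ℝ) (a b : Fin 4) : (Fin 3 → ℝ) → ℝ :=
  fun x => ∑ m : Fin 4, ∑ n : Fin 4, Cob f m a n x * Cob f n b m x

/-- `⁽⁶⁾A_{ab} := C_{man}C^m{}_b{}^n`. -/
def A6 (f : (Fin 3 → ℝ) → ℝ) (a b : Fin 4) : (Fin 3 → ℝ) → ℝ :=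
  fun x => ∑ m : Fin 4, ∑ n : Fin 4, epsM m * epsM n * Cob f m a n x * Cob f m b n x

/-- `⁽⁷⁾A_{ab} := C_a C_b`. -/
def A7 (f : (Fin 3 → ℝ) → ℝ) (a b : Fin 4) : (Fin 3 → ℝ) → ℝ :=
  fun x => Cone f a x * Cone f b x

/-- `⁽¹⁾A := η^{ab}⁽¹⁾A_{ab}`. -/
def A1s (f : (Fin 3 → ℝ) → ℝ) : (Fin 3 → ℝ) → ℝ :=
  fun x => ∑ a : Fin 4, epsM a * A1 f a a x

/-- `⁽²⁾A := η^{ab}⁽³⁾A_{ab}`. -/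
def A2s (f : (Fin 3 → ℝ) → ℝ) : (Fin 3 → ℝ) → ℝ :=
  fun x => ∑ a : Fin 4, epsM a * A3 f a a x

/-- `⁽³⁾A := η^{ab}⁽⁴⁾A_{ab}`. -/
def A3s (f : (Fin 3 → ℝ) → ℝ) : (Fin 3 → ℝ) → ℝ :=
  fun x => ∑ a : Fin 4, epsM a * A4 f a a x

/-- `φ_{ij} := f_{ij} − fᵢfⱼ`. -/
def phiM (f : (Fin 3 → ℝ) → ℝ) (i j : Fin 3) : (Fin 3 → ℝ) → ℝ :=
  fun x => pd i (pd j f) x - pd i f x * pd j f x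

/-- `Δ̃φ := φ₁₁ + φ₂₂ + φ₃₃`. -/
def tphi (f : (Fin 3 → ℝ) → ℝ) : (Fin 3 → ℝ) → ℝ :=
  fun x => ∑ i : Fin 3, phiM f i i x

/-- The Laplacian `Δf := f₁₁ + f₂₂ + f₃₃`. -/
def lap (f : (Fin 3 → ℝ) → ℝ) : (Fin 3 → ℝ) → ℝ :=
  fun x => ∑ i : Fin 3, pd i (pd i f) x

/-- `∇²f := f₁² + f₂² + f₃²`. -/
def grad2 (f : (Fin 3 → ℝ) → ℝ) : (Fin 3 → ℝ) → ℝ :=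
  fun x => ∑ i : Fin 3, pd i f x ^ 2

/-- The leading (second order) part
`L_{ab} = β₁⁽¹⁾B_{(ab)} + β₂⁽²⁾B_{(ab)} + β₃⁽³⁾B_{ab} + β₄η_{ab}B + β₅⁽¹⁾B_{[ab]} + β₆⁽²⁾B_{[ab]}`. -/
def Lmat (β₁ β₂ β₃ β₄ β₅ β₆ : ℝ) (f : (Fin 3 → ℝ) → ℝ) (a b : Fin 4) :
    (Fin 3 → ℝ) → ℝ := fun x =>
  β₁ * ((B1 f a b x + B1 f b a x) / 2) + β₂ * ((B2 f a b x + B2 f b a x) / 2) +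
  β₃ * B3 f a b x + β₄ * etaM a b * Bscalar f x +
  β₅ * ((B1 f a b x - B1 f b a x) / 2) + β₆ * ((B2 f a b x - B2 f b a x) / 2)

/-- The quadratic part `Q_{ab}`. -/
def Qmat (α₁ α₂ α₃ α₄ α₅ α₆ α₇ α₈ α₉ α₁₀ α₁₁ α₁₂ : ℝ) (f : (Fin 3 → ℝ) → ℝ)
    (a b : Fin 4) : (Fin 3 → ℝ) → ℝ := fun x =>
  α₁ * ((A1 f a b x + A1 f b a x) / 2) + α₂ * A2 f a b x + α₃ * A3 f a b x +
  α₄ * ((A4 f a b x + A4 f b a x) / 2) + α₅ * A5 f a b x + α₆ * A6 f a b x +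
  α₇ * A7 f a b x + α₈ * ((A1 f a b x - A1 f b a x) / 2) +
  α₉ * ((A4 f a b x - A4 f b a x) / 2) +
  etaM a b * (α₁₀ * A1s f x + α₁₁ * A2s f x + α₁₂ * A3s f x)

/-- `diag(β₁−β₄, β₁+β₄, β₁+β₄, β₁+β₄)`. -/
def diagM (β₁ β₄ : ℝ) (a b : Fin 4) : ℝ :=
  if a = b then (if a = 0 then β₁ - β₄ else β₁ + β₄) else 0

open Real

section Derivatives

variable {f g : (Fin 3 → ℝ) → ℝ} {x : Fin 3 → ℝ}

@[simp]
lemma pd4_zero (g : (Fin 3 → ℝ) → ℝ) : pd4 g 0 = 0 := by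
  simp [pd4]

@[simp]
lemma pd4_succ (g : (Fin 3 → ℝ) → ℝ) (q : Fin 3) : pd4 g q.succ = pd q g := by
  simp [pd4, Fin.succ_ne_zero]

lemma pd4_const (c : ℝ) (p : Fin 4) (x : Fin 3 → ℝ) : pd4 (fun _ => c) p x = 0 := by
  cases p using Fin.cases <;> simp [pd]

lemma pd4_sub (hf : Differentiable ℝ f) (hg : Differentiable ℝ g) (p : Fin 4) :
    pd4 (fun y => f y - g y) p x = pd4 f p x - pd4 g p x := by
  cases p using Fin.cases
  · simp
  · simp [pd, fderiv_fun_sub (hf x) (hg x)]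

lemma pd4_exp_neg_mul (hf : Differentiable ℝ f) (hg : Differentiable ℝ g) (p : Fin 4) :
    pd4 (fun y => exp (-f y) * g y) p x = exp (-f x) * (pd4 g p x - pd4 f p x * g x) := by
  cases p using Fin.cases
  · simp
  · have hneg : DifferentiableAt ℝ (fun y => -f y) x := (hf x).neg
    simp only [pd4_succ, pd]
    rw [fderiv_fun_mul hneg.exp (hg x), fderiv_exp hneg, fderiv_fun_neg]
    simp only [add_apply, smul_apply, smul_eq_mul, smul_neg, neg_apply]
    ring

lemma ContDiff.differentiable_pd4 (hf : ContDiff ℝ 2 f) (p : Fin 4) :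
    Differentiable ℝ (pd4 f p) := by
  cases p using Fin.cases
  · simp only [pd4_zero]
    exact differentiable_const 0
  · simp only [pd4_succ]
    exact ((hf.fderiv_right (m := 1) le_rfl).differentiable one_ne_zero).clm_apply
      (differentiable_const _)

lemma ContDiff.pd_pd_comm (hf : ContDiff ℝ 2 f) (i j : Fin 3) (x : Fin 3 → ℝ) :
    pd i (pd j f) x = pd j (pd i f) x := by
  have hf' : Differentiable ℝ (fderiv ℝ f) :=
    (hf.fderiv_right (m := 1) le_rfl).differentiable one_ne_zero
  have hsecond (k l : Fin 3) :
      pd k (pd l f) x = fderiv ℝ (fderiv ℝ f) x (Pi.single k 1) (Pi.single l 1) := by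
    change fderiv ℝ (fun y => fderiv ℝ f y (Pi.single l 1)) x (Pi.single k 1) = _
    simp [fderiv_clm_apply (hf' x) (differentiableAt_const _)]
  rw [hsecond, hsecond, (hf.contDiffAt.isSymmSndFDerivAt (by simp)).eq]

end Derivatives

def cobPattern (a m n : Fin 4) (v : Fin 4 → ℝ) : ℝ :=
  if a = 0 then (if m = 0 then v n else 0) - (if n = 0 then v m else 0)
  else (if n = a then v m else 0) - (if m = a then v n else 0)

section Pattern

variable {a m n : Fin 4}

lemma cobPattern_const_mul (c : ℝ) (v : Fin 4 → ℝ) :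
    cobPattern a m n (fun k => c * v k) = c * cobPattern a m n v := by
  unfold cobPattern
  split_ifs <;> ring

lemma pd4_cobPattern {G : Fin 4 → (Fin 3 → ℝ) → ℝ} (hG : ∀ k, Differentiable ℝ (G k))
    (p : Fin 4) (x : Fin 3 → ℝ) :
    pd4 (fun y => cobPattern a m n (fun k => G k y)) p x =
      cobPattern a m n (fun k => pd4 (G k) p x) := by
  unfold cobPattern
  split_ifs <;> rw [pd4_sub] <;> simp [pd4_const, hG]

lemma sum_epsM_mul_cobPattern {ψ : Fin 4 → Fin 4 → ℝ} (hψ : ∀ n, ψ 0 n = 0) (a b : Fin 4) :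
    ∑ m, epsM m * cobPattern a b m (ψ m) = epsM a * (ψ a b - if a = b then ∑ k, ψ k k else 0) := by
  fin_cases a <;> fin_cases b <;> simp [Fin.sum_univ_four, cobPattern, epsM, hψ] <;> ring

lemma sum_cobPattern_self_self {v : Fin 4 → ℝ} (hv : v 0 = 0) (a : Fin 4) :
    ∑ m, cobPattern m m a v = -v a := by
  fin_cases a <;> simp [Fin.sum_univ_four, cobPattern, hv]

lemma sum_cobPattern {ψ : Fin 4 → Fin 4 → ℝ} (hψ : ∀ n, ψ 0 n = 0) (a b : Fin 4) :
    ∑ m, cobPattern m a b (ψ m) = ψ b a - ψ a b := by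
  fin_cases a <;> fin_cases b <;> simp [Fin.sum_univ_four, cobPattern, hψ] <;> ring

end Pattern

def phi4 (f : (Fin 3 → ℝ) → ℝ) (x : Fin 3 → ℝ) (p n : Fin 4) : ℝ :=
  pd4 (pd4 f n) p x - pd4 f p x * pd4 f n x

lemma epsM_mul_self (a : Fin 4) : epsM a * epsM a = 1 := by
  unfold epsM
  split_ifs <;> norm_num

section Coframe

variable {f : (Fin 3 → ℝ) → ℝ} {x : Fin 3 → ℝ}

@[simp]
lemma phi4_zero_left (f : (Fin 3 → ℝ) → ℝ) (x : Fin 3 → ℝ) (n : Fin 4) : phi4 f x 0 n = 0 := by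
  simp [phi4]

@[simp]
lemma phi4_zero_right (f : (Fin 3 → ℝ) → ℝ) (x : Fin 3 → ℝ) (p : Fin 4) : phi4 f x p 0 = 0 := by
  simp only [phi4, pd4_zero, Pi.zero_apply, mul_zero, sub_zero]
  exact pd4_const 0 p x

@[simp]
lemma phi4_succ_succ (f : (Fin 3 → ℝ) → ℝ) (x : Fin 3 → ℝ) (i j : Fin 3) :
    phi4 f x i.succ j.succ = phiM f i j x := by
  simp [phi4, phiM]

lemma ContDiff.phi4_comm (hf : ContDiff ℝ 2 f) (p n : Fin 4) : phi4 f x p n = phi4 f x n p := by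
  cases p using Fin.cases <;> cases n using Fin.cases
  all_goals simp [phiM, hf.pd_pd_comm, mul_comm]

lemma sum_phi4_self (f : (Fin 3 → ℝ) → ℝ) (x : Fin 3 → ℝ) : ∑ k, phi4 f x k k = tphi f x := by
  simp [Fin.sum_univ_succ, tphi]

lemma Cob_eq_cobPattern (a m n : Fin 4) (x : Fin 3 → ℝ) :
    Cob f a m n x = cobPattern a m n (fun k => exp (-f x) * pd4 f k x) := by
  unfold Cob cobPattern
  split_ifs <;> ring

lemma Bob_eq_cobPattern (hf : ContDiff ℝ 2 f) (a m n p : Fin 4) :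
    Bob f a m n p x = exp (-2 * f x) * cobPattern a m n (phi4 f x p) := by
  have hf' : Differentiable ℝ f := hf.differentiable two_ne_zero
  have hCob : Cob f a m n = fun y => cobPattern a m n (fun k => exp (-f y) * pd4 f k y) :=
    funext (Cob_eq_cobPattern a m n)
  have hpd : (fun k => pd4 (fun y => exp (-f y) * pd4 f k y) p x) =
      fun k => exp (-f x) * phi4 f x p k :=
    funext fun k => pd4_exp_neg_mul hf' (hf.differentiable_pd4 k) p
  rw [Bob, hCob, pd4_cobPattern (G := fun k y => exp (-f y) * pd4 f k y)
    (fun k => hf'.neg.exp.mul (hf.differentiable_pd4 k)), hpd,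
    cobPattern_const_mul, ← mul_assoc, ← exp_add]
  ring_nf

lemma B1_eq (hf : ContDiff ℝ 2 f) (a b : Fin 4) :
    B1 f a b x = exp (-2 * f x) * (phi4 f x a b - if a = b then tphi f x else 0) := by
  calc B1 f a b x
      = exp (-2 * f x) * (epsM a * ∑ m, epsM m * cobPattern a b m (phi4 f x m)) := by
        simp only [B1, Bob_eq_cobPattern hf, Finset.mul_sum]
        exact Finset.sum_congr rfl fun m _ => by ring
    _ = _ := by
        rw [sum_epsM_mul_cobPattern (phi4_zero_left f x), sum_phi4_self,
          ← mul_assoc (epsM a), epsM_mul_self, one_mul]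

lemma B2_eq (hf : ContDiff ℝ 2 f) (a b : Fin 4) :
    B2 f a b x = -exp (-2 * f x) * phi4 f x b a := by
  simp only [B2, Bob_eq_cobPattern hf, ← Finset.mul_sum,
    sum_cobPattern_self_self (phi4_zero_right f x b)]
  ring

lemma B3_eq_zero (hf : ContDiff ℝ 2 f) (a b : Fin 4) : B3 f a b x = 0 := by
  simp only [B3, Bob_eq_cobPattern hf, ← Finset.mul_sum, sum_cobPattern (phi4_zero_left f x),
    hf.phi4_comm b a, sub_self, mul_zero]

lemma Bscalar_eq (hf : ContDiff ℝ 2 f) : Bscalar f x = exp (-2 * f x) * tphi f x := by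
  simp only [Bscalar, B1_eq hf, Fin.sum_univ_four, ← sum_phi4_self f x, phi4_zero_left, epsM,
    Fin.reduceEq, if_true, if_false]
  ring

lemma Lmat_eq (hf : ContDiff ℝ 2 f) (β₁ β₂ β₃ β₄ β₅ β₆ : ℝ) (a b : Fin 4) :
    Lmat β₁ β₂ β₃ β₄ β₅ β₆ f a b x = exp (-2 * f x) *
      ((β₁ - β₂) * phi4 f x a b + (β₄ * etaM a b - β₁ * if a = b then 1 else 0) * tphi f x) := by
  simp only [Lmat, B1_eq hf, B2_eq hf, B3_eq_zero hf, Bscalar_eq hf, hf.phi4_comm b a,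
    eq_comm (a := b)]
  split_ifs <;> ring

end Coframe

/-- for the quasi-conformal coframe, the off-diagonal spatial entries of the
leading matrix are `L_{ij} = (β₁ − β₂)e^{−2f}φ_{ij}` (`i ≠ j`), all time–space entries
vanish, and if `β₁ = β₂` then `L_{ab}` is diagonal and equals
`−e^{−2f}·Δ̃φ·diag(β₁−β₄, β₁+β₄, β₁+β₄, β₁+β₄)` at every point. -/
theorem leading_matrix_structure (β₁ β₂ β₃ β₄ β₅ β₆ : ℝ)
    (f : (Fin 3 → ℝ) → ℝ) (hf : ContDiff ℝ (⊤ : ℕ∞) f) :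
    (∀ (i j : Fin 3), i ≠ j → ∀ x : Fin 3 → ℝ,
      Lmat β₁ β₂ β₃ β₄ β₅ β₆ f i.succ j.succ x =
        (β₁ - β₂) * Real.exp (-2 * f x) * phiM f i j x) ∧
    (∀ (i : Fin 3) (x : Fin 3 → ℝ),
      Lmat β₁ β₂ β₃ β₄ β₅ β₆ f 0 i.succ x = 0 ∧
      Lmat β₁ β₂ β₃ β₄ β₅ β₆ f i.succ 0 x = 0) ∧
    (β₁ = β₂ → ∀ (a b : Fin 4) (x : Fin 3 → ℝ),
      Lmat β₁ β₂ β₃ β₄ β₅ β₆ f a b x =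
        -Real.exp (-2 * f x) * tphi f x * diagM β₁ β₄ a b) := by
  have hf2 : ContDiff ℝ 2 f := hf.of_le (WithTop.coe_le_coe.mpr le_top)
  refine ⟨fun i j hij x => ?_, fun i x => ?_, fun hβ a b x => ?_⟩
  · simp only [Lmat_eq hf2, phi4_succ_succ, etaM, Fin.succ_inj, if_neg hij]
    ring
  · simp [Lmat_eq hf2, etaM, Fin.succ_ne_zero, (Fin.succ_ne_zero i).symm]
  · subst hβ
    rw [Lmat_eq hf2]
    by_cases hab : a = b
    · subst hab
      simp only [etaM, epsM, diagM, if_true]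
      split_ifs <;> ring
    · simp only [etaM, diagM, if_neg hab]
      ring
end
end

section
/- For the quasi-conformal coframe, every off-diagonal spatial entry of the quadratic matrix satisfies Q_{ij} = (α₁ − 2α₃ − α₄ + 3α₅ + 2α₆ + α₇)·e^{−2f}·fᵢfⱼ for i ≠ j, and all time–space entries Q_{0i}, Q_{i0} vanish. Consequently, the off-diagonal entries of Q_{ab} vanish for every smooth f at every point if and only if α₁ − 2α₃ − α₄ + 3α₅ + 2α₆ + α₇ = 0. -/
open scoped BigOperators

noncomputable section

lemma pd4_mk0 (f : (Fin 3 → ℝ) → ℝ) (h : 0 < 4) : pd4 f ⟨0, h⟩ = 0 := rfl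
lemma pd4_mk1 (f : (Fin 3 → ℝ) → ℝ) (h : 1 < 4) : pd4 f ⟨1, h⟩ = pd 0 f := rfl
lemma pd4_mk2 (f : (Fin 3 → ℝ) → ℝ) (h : 2 < 4) : pd4 f ⟨2, h⟩ = pd 1 f := rfl
lemma pd4_mk3 (f : (Fin 3 → ℝ) → ℝ) (h : 3 < 4) : pd4 f ⟨3, h⟩ = pd 2 f := rfl
lemma pd4_0 (f : (Fin 3 → ℝ) → ℝ) : pd4 f 0 = 0 := rfl
lemma pd4_1 (f : (Fin 3 → ℝ) → ℝ) : pd4 f 1 = pd 0 f := rfl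
lemma pd4_2 (f : (Fin 3 → ℝ) → ℝ) : pd4 f 2 = pd 1 f := rfl
lemma pd4_3 (f : (Fin 3 → ℝ) → ℝ) : pd4 f 3 = pd 2 f := rfl

set_option maxHeartbeats 1000000 in
lemma Qsp12 (α₁ α₂ α₃ α₄ α₅ α₆ α₇ α₈ α₉ α₁₀ α₁₁ α₁₂ : ℝ) (f : (Fin 3 → ℝ) → ℝ) (x : Fin 3 → ℝ) :
    Qmat α₁ α₂ α₃ α₄ α₅ α₆ α₇ α₈ α₉ α₁₀ α₁₁ α₁₂ f 1 2 x =
      (α₁ - 2 * α₃ - α₄ + 3 * α₅ + 2 * α₆ + α₇) * Real.exp (-2 * f x) * (pd 0 f x * pd 1 f x) := by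
  have hE : Real.exp (-2 * f x) = Real.exp (-f x) * Real.exp (-f x) := by
    rw [← Real.exp_add]; ring_nf
  rw [hE]
  simp (config := { decide := true }) only [Qmat, A1, A2, A3, A4, A5, A6, A7, A1s, A2s, A3s,
    Cone, Cob, epsM, etaM, pd4_0, pd4_1, pd4_2, pd4_3, pd4_mk0, pd4_mk1, pd4_mk2, pd4_mk3,
    Pi.zero_apply, Fin.sum_univ_four, if_true, if_false, mul_zero, zero_mul, mul_one, one_mul,
    sub_zero, zero_sub, add_zero, zero_add, mul_neg, neg_mul, neg_neg, dite_eq_ite]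
  ring

set_option maxHeartbeats 1000000 in
lemma Qsp13 (α₁ α₂ α₃ α₄ α₅ α₆ α₇ α₈ α₉ α₁₀ α₁₁ α₁₂ : ℝ) (f : (Fin 3 → ℝ) → ℝ) (x : Fin 3 → ℝ) :
    Qmat α₁ α₂ α₃ α₄ α₅ α₆ α₇ α₈ α₉ α₁₀ α₁₁ α₁₂ f 1 3 x =
      (α₁ - 2 * α₃ - α₄ + 3 * α₅ + 2 * α₆ + α₇) * Real.exp (-2 * f x) * (pd 0 f x * pd 2 f x) := by
  have hE : Real.exp (-2 * f x) = Real.exp (-f x) * Real.exp (-f x) := by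
    rw [← Real.exp_add]; ring_nf
  rw [hE]
  simp (config := { decide := true }) only [Qmat, A1, A2, A3, A4, A5, A6, A7, A1s, A2s, A3s,
    Cone, Cob, epsM, etaM, pd4_0, pd4_1, pd4_2, pd4_3, pd4_mk0, pd4_mk1, pd4_mk2, pd4_mk3,
    Pi.zero_apply, Fin.sum_univ_four, if_true, if_false, mul_zero, zero_mul, mul_one, one_mul,
    sub_zero, zero_sub, add_zero, zero_add, mul_neg, neg_mul, neg_neg, dite_eq_ite]
  ring

set_option maxHeartbeats 1000000 in
lemma Qsp21 (α₁ α₂ α₃ α₄ α₅ α₆ α₇ α₈ α₉ α₁₀ α₁₁ α₁₂ : ℝ) (f : (Fin 3 → ℝ) → ℝ) (x : Fin 3 → ℝ) :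
    Qmat α₁ α₂ α₃ α₄ α₅ α₆ α₇ α₈ α₉ α₁₀ α₁₁ α₁₂ f 2 1 x =
      (α₁ - 2 * α₃ - α₄ + 3 * α₅ + 2 * α₆ + α₇) * Real.exp (-2 * f x) * (pd 1 f x * pd 0 f x) := by
  have hE : Real.exp (-2 * f x) = Real.exp (-f x) * Real.exp (-f x) := by
    rw [← Real.exp_add]; ring_nf
  rw [hE]
  simp (config := { decide := true }) only [Qmat, A1, A2, A3, A4, A5, A6, A7, A1s, A2s, A3s,
    Cone, Cob, epsM, etaM, pd4_0, pd4_1, pd4_2, pd4_3, pd4_mk0, pd4_mk1, pd4_mk2, pd4_mk3,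
    Pi.zero_apply, Fin.sum_univ_four, if_true, if_false, mul_zero, zero_mul, mul_one, one_mul,
    sub_zero, zero_sub, add_zero, zero_add, mul_neg, neg_mul, neg_neg, dite_eq_ite]
  ring

set_option maxHeartbeats 1000000 in
lemma Qsp23 (α₁ α₂ α₃ α₄ α₅ α₆ α₇ α₈ α₉ α₁₀ α₁₁ α₁₂ : ℝ) (f : (Fin 3 → ℝ) → ℝ) (x : Fin 3 → ℝ) :
    Qmat α₁ α₂ α₃ α₄ α₅ α₆ α₇ α₈ α₉ α₁₀ α₁₁ α₁₂ f 2 3 x =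
      (α₁ - 2 * α₃ - α₄ + 3 * α₅ + 2 * α₆ + α₇) * Real.exp (-2 * f x) * (pd 1 f x * pd 2 f x) := by
  have hE : Real.exp (-2 * f x) = Real.exp (-f x) * Real.exp (-f x) := by
    rw [← Real.exp_add]; ring_nf
  rw [hE]
  simp (config := { decide := true }) only [Qmat, A1, A2, A3, A4, A5, A6, A7, A1s, A2s, A3s,
    Cone, Cob, epsM, etaM, pd4_0, pd4_1, pd4_2, pd4_3, pd4_mk0, pd4_mk1, pd4_mk2, pd4_mk3,
    Pi.zero_apply, Fin.sum_univ_four, if_true, if_false, mul_zero, zero_mul, mul_one, one_mul,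
    sub_zero, zero_sub, add_zero, zero_add, mul_neg, neg_mul, neg_neg, dite_eq_ite]
  ring

set_option maxHeartbeats 1000000 in
lemma Qsp31 (α₁ α₂ α₃ α₄ α₅ α₆ α₇ α₈ α₉ α₁₀ α₁₁ α₁₂ : ℝ) (f : (Fin 3 → ℝ) → ℝ) (x : Fin 3 → ℝ) :
    Qmat α₁ α₂ α₃ α₄ α₅ α₆ α₇ α₈ α₉ α₁₀ α₁₁ α₁₂ f 3 1 x =
      (α₁ - 2 * α₃ - α₄ + 3 * α₅ + 2 * α₆ + α₇) * Real.exp (-2 * f x) * (pd 2 f x * pd 0 f x) := by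
  have hE : Real.exp (-2 * f x) = Real.exp (-f x) * Real.exp (-f x) := by
    rw [← Real.exp_add]; ring_nf
  rw [hE]
  simp (config := { decide := true }) only [Qmat, A1, A2, A3, A4, A5, A6, A7, A1s, A2s, A3s,
    Cone, Cob, epsM, etaM, pd4_0, pd4_1, pd4_2, pd4_3, pd4_mk0, pd4_mk1, pd4_mk2, pd4_mk3,
    Pi.zero_apply, Fin.sum_univ_four, if_true, if_false, mul_zero, zero_mul, mul_one, one_mul,
    sub_zero, zero_sub, add_zero, zero_add, mul_neg, neg_mul, neg_neg, dite_eq_ite]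
  ring

set_option maxHeartbeats 1000000 in
lemma Qsp32 (α₁ α₂ α₃ α₄ α₅ α₆ α₇ α₈ α₉ α₁₀ α₁₁ α₁₂ : ℝ) (f : (Fin 3 → ℝ) → ℝ) (x : Fin 3 → ℝ) :
    Qmat α₁ α₂ α₃ α₄ α₅ α₆ α₇ α₈ α₉ α₁₀ α₁₁ α₁₂ f 3 2 x =
      (α₁ - 2 * α₃ - α₄ + 3 * α₅ + 2 * α₆ + α₇) * Real.exp (-2 * f x) * (pd 2 f x * pd 1 f x) := by
  have hE : Real.exp (-2 * f x) = Real.exp (-f x) * Real.exp (-f x) := by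
    rw [← Real.exp_add]; ring_nf
  rw [hE]
  simp (config := { decide := true }) only [Qmat, A1, A2, A3, A4, A5, A6, A7, A1s, A2s, A3s,
    Cone, Cob, epsM, etaM, pd4_0, pd4_1, pd4_2, pd4_3, pd4_mk0, pd4_mk1, pd4_mk2, pd4_mk3,
    Pi.zero_apply, Fin.sum_univ_four, if_true, if_false, mul_zero, zero_mul, mul_one, one_mul,
    sub_zero, zero_sub, add_zero, zero_add, mul_neg, neg_mul, neg_neg, dite_eq_ite]
  ring

set_option maxHeartbeats 1000000 in
lemma Qts01 (α₁ α₂ α₃ α₄ α₅ α₆ α₇ α₈ α₉ α₁₀ α₁₁ α₁₂ : ℝ) (f : (Fin 3 → ℝ) → ℝ) (x : Fin 3 → ℝ) :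
    Qmat α₁ α₂ α₃ α₄ α₅ α₆ α₇ α₈ α₉ α₁₀ α₁₁ α₁₂ f 0 1 x = 0 := by
  simp (config := { decide := true }) only [Qmat, A1, A2, A3, A4, A5, A6, A7, A1s, A2s, A3s,
    Cone, Cob, epsM, etaM, pd4_0, pd4_1, pd4_2, pd4_3, pd4_mk0, pd4_mk1, pd4_mk2, pd4_mk3,
    Pi.zero_apply, Fin.sum_univ_four, if_true, if_false, mul_zero, zero_mul, mul_one, one_mul,
    sub_zero, zero_sub, add_zero, zero_add, mul_neg, neg_mul, neg_neg, dite_eq_ite]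
  ring

set_option maxHeartbeats 1000000 in
lemma Qts02 (α₁ α₂ α₃ α₄ α₅ α₆ α₇ α₈ α₉ α₁₀ α₁₁ α₁₂ : ℝ) (f : (Fin 3 → ℝ) → ℝ) (x : Fin 3 → ℝ) :
    Qmat α₁ α₂ α₃ α₄ α₅ α₆ α₇ α₈ α₉ α₁₀ α₁₁ α₁₂ f 0 2 x = 0 := by
  simp (config := { decide := true }) only [Qmat, A1, A2, A3, A4, A5, A6, A7, A1s, A2s, A3s,
    Cone, Cob, epsM, etaM, pd4_0, pd4_1, pd4_2, pd4_3, pd4_mk0, pd4_mk1, pd4_mk2, pd4_mk3,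
    Pi.zero_apply, Fin.sum_univ_four, if_true, if_false, mul_zero, zero_mul, mul_one, one_mul,
    sub_zero, zero_sub, add_zero, zero_add, mul_neg, neg_mul, neg_neg, dite_eq_ite]
  ring

set_option maxHeartbeats 1000000 in
lemma Qts03 (α₁ α₂ α₃ α₄ α₅ α₆ α₇ α₈ α₉ α₁₀ α₁₁ α₁₂ : ℝ) (f : (Fin 3 → ℝ) → ℝ) (x : Fin 3 → ℝ) :
    Qmat α₁ α₂ α₃ α₄ α₅ α₆ α₇ α₈ α₉ α₁₀ α₁₁ α₁₂ f 0 3 x = 0 := by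
  simp (config := { decide := true }) only [Qmat, A1, A2, A3, A4, A5, A6, A7, A1s, A2s, A3s,
    Cone, Cob, epsM, etaM, pd4_0, pd4_1, pd4_2, pd4_3, pd4_mk0, pd4_mk1, pd4_mk2, pd4_mk3,
    Pi.zero_apply, Fin.sum_univ_four, if_true, if_false, mul_zero, zero_mul, mul_one, one_mul,
    sub_zero, zero_sub, add_zero, zero_add, mul_neg, neg_mul, neg_neg, dite_eq_ite]
  ring

set_option maxHeartbeats 1000000 in
lemma Qts10 (α₁ α₂ α₃ α₄ α₅ α₆ α₇ α₈ α₉ α₁₀ α₁₁ α₁₂ : ℝ) (f : (Fin 3 → ℝ) → ℝ) (x : Fin 3 → ℝ) :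
    Qmat α₁ α₂ α₃ α₄ α₅ α₆ α₇ α₈ α₉ α₁₀ α₁₁ α₁₂ f 1 0 x = 0 := by
  simp (config := { decide := true }) only [Qmat, A1, A2, A3, A4, A5, A6, A7, A1s, A2s, A3s,
    Cone, Cob, epsM, etaM, pd4_0, pd4_1, pd4_2, pd4_3, pd4_mk0, pd4_mk1, pd4_mk2, pd4_mk3,
    Pi.zero_apply, Fin.sum_univ_four, if_true, if_false, mul_zero, zero_mul, mul_one, one_mul,
    sub_zero, zero_sub, add_zero, zero_add, mul_neg, neg_mul, neg_neg, dite_eq_ite]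
  ring

set_option maxHeartbeats 1000000 in
lemma Qts20 (α₁ α₂ α₃ α₄ α₅ α₆ α₇ α₈ α₉ α₁₀ α₁₁ α₁₂ : ℝ) (f : (Fin 3 → ℝ) → ℝ) (x : Fin 3 → ℝ) :
    Qmat α₁ α₂ α₃ α₄ α₅ α₆ α₇ α₈ α₉ α₁₀ α₁₁ α₁₂ f 2 0 x = 0 := by
  simp (config := { decide := true }) only [Qmat, A1, A2, A3, A4, A5, A6, A7, A1s, A2s, A3s,
    Cone, Cob, epsM, etaM, pd4_0, pd4_1, pd4_2, pd4_3, pd4_mk0, pd4_mk1, pd4_mk2, pd4_mk3,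
    Pi.zero_apply, Fin.sum_univ_four, if_true, if_false, mul_zero, zero_mul, mul_one, one_mul,
    sub_zero, zero_sub, add_zero, zero_add, mul_neg, neg_mul, neg_neg, dite_eq_ite]
  ring

set_option maxHeartbeats 1000000 in
lemma Qts30 (α₁ α₂ α₃ α₄ α₅ α₆ α₇ α₈ α₉ α₁₀ α₁₁ α₁₂ : ℝ) (f : (Fin 3 → ℝ) → ℝ) (x : Fin 3 → ℝ) :
    Qmat α₁ α₂ α₃ α₄ α₅ α₆ α₇ α₈ α₉ α₁₀ α₁₁ α₁₂ f 3 0 x = 0 := by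
  simp (config := { decide := true }) only [Qmat, A1, A2, A3, A4, A5, A6, A7, A1s, A2s, A3s,
    Cone, Cob, epsM, etaM, pd4_0, pd4_1, pd4_2, pd4_3, pd4_mk0, pd4_mk1, pd4_mk2, pd4_mk3,
    Pi.zero_apply, Fin.sum_univ_four, if_true, if_false, mul_zero, zero_mul, mul_one, one_mul,
    sub_zero, zero_sub, add_zero, zero_add, mul_neg, neg_mul, neg_neg, dite_eq_ite]
  ring

/-- for the quasi-conformal coframe, the off-diagonal spatial entries of the
quadratic matrix are `Q_{ij} = (α₁ − 2α₃ − α₄ + 3α₅ + 2α₆ + α₇)e^{−2f}fᵢfⱼ` (`i ≠ j`) and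
all time–space entries vanish; consequently, the off-diagonal entries of `Q_{ab}` vanish
for every smooth `f` at every point iff `α₁ − 2α₃ − α₄ + 3α₅ + 2α₆ + α₇ = 0`. -/
theorem quadratic_matrix_off_diagonal
    (α₁ α₂ α₃ α₄ α₅ α₆ α₇ α₈ α₉ α₁₀ α₁₁ α₁₂ : ℝ) :
    (∀ f : (Fin 3 → ℝ) → ℝ, ContDiff ℝ (⊤ : ℕ∞) f →
      (∀ (i j : Fin 3), i ≠ j → ∀ x : Fin 3 → ℝ,
        Qmat α₁ α₂ α₃ α₄ α₅ α₆ α₇ α₈ α₉ α₁₀ α₁₁ α₁₂ f i.succ j.succ x =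
          (α₁ - 2 * α₃ - α₄ + 3 * α₅ + 2 * α₆ + α₇) *
            Real.exp (-2 * f x) * (pd i f x * pd j f x)) ∧
      (∀ (i : Fin 3) (x : Fin 3 → ℝ),
        Qmat α₁ α₂ α₃ α₄ α₅ α₆ α₇ α₈ α₉ α₁₀ α₁₁ α₁₂ f 0 i.succ x = 0 ∧
        Qmat α₁ α₂ α₃ α₄ α₅ α₆ α₇ α₈ α₉ α₁₀ α₁₁ α₁₂ f i.succ 0 x = 0)) ∧
    ((∀ f : (Fin 3 → ℝ) → ℝ, ContDiff ℝ (⊤ : ℕ∞) f →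
        ∀ (a b : Fin 4), a ≠ b → ∀ x : Fin 3 → ℝ,
          Qmat α₁ α₂ α₃ α₄ α₅ α₆ α₇ α₈ α₉ α₁₀ α₁₁ α₁₂ f a b x = 0) ↔
      α₁ - 2 * α₃ - α₄ + 3 * α₅ + 2 * α₆ + α₇ = 0) := by
  have key : ∀ f : (Fin 3 → ℝ) → ℝ,
      (∀ (i j : Fin 3), i ≠ j → ∀ x : Fin 3 → ℝ,
        Qmat α₁ α₂ α₃ α₄ α₅ α₆ α₇ α₈ α₉ α₁₀ α₁₁ α₁₂ f i.succ j.succ x =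
          (α₁ - 2 * α₃ - α₄ + 3 * α₅ + 2 * α₆ + α₇) *
            Real.exp (-2 * f x) * (pd i f x * pd j f x)) ∧
      (∀ (i : Fin 3) (x : Fin 3 → ℝ),
        Qmat α₁ α₂ α₃ α₄ α₅ α₆ α₇ α₈ α₉ α₁₀ α₁₁ α₁₂ f 0 i.succ x = 0 ∧
        Qmat α₁ α₂ α₃ α₄ α₅ α₆ α₇ α₈ α₉ α₁₀ α₁₁ α₁₂ f i.succ 0 x = 0) := by
    intro f
    constructor
    · intro i j
      fin_cases i <;> fin_cases j <;> intro hij x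
      · exact absurd rfl hij
      · exact Qsp12 α₁ α₂ α₃ α₄ α₅ α₆ α₇ α₈ α₉ α₁₀ α₁₁ α₁₂ f x
      · exact Qsp13 α₁ α₂ α₃ α₄ α₅ α₆ α₇ α₈ α₉ α₁₀ α₁₁ α₁₂ f x
      · exact Qsp21 α₁ α₂ α₃ α₄ α₅ α₆ α₇ α₈ α₉ α₁₀ α₁₁ α₁₂ f x
      · exact absurd rfl hij
      · exact Qsp23 α₁ α₂ α₃ α₄ α₅ α₆ α₇ α₈ α₉ α₁₀ α₁₁ α₁₂ f x
      · exact Qsp31 α₁ α₂ α₃ α₄ α₅ α₆ α₇ α₈ α₉ α₁₀ α₁₁ α₁₂ f x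
      · exact Qsp32 α₁ α₂ α₃ α₄ α₅ α₆ α₇ α₈ α₉ α₁₀ α₁₁ α₁₂ f x
      · exact absurd rfl hij
    · intro i x
      fin_cases i
      · exact ⟨Qts01 α₁ α₂ α₃ α₄ α₅ α₆ α₇ α₈ α₉ α₁₀ α₁₁ α₁₂ f x,
          Qts10 α₁ α₂ α₃ α₄ α₅ α₆ α₇ α₈ α₉ α₁₀ α₁₁ α₁₂ f x⟩
      · exact ⟨Qts02 α₁ α₂ α₃ α₄ α₅ α₆ α₇ α₈ α₉ α₁₀ α₁₁ α₁₂ f x,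
          Qts20 α₁ α₂ α₃ α₄ α₅ α₆ α₇ α₈ α₉ α₁₀ α₁₁ α₁₂ f x⟩
      · exact ⟨Qts03 α₁ α₂ α₃ α₄ α₅ α₆ α₇ α₈ α₉ α₁₀ α₁₁ α₁₂ f x,
          Qts30 α₁ α₂ α₃ α₄ α₅ α₆ α₇ α₈ α₉ α₁₀ α₁₁ α₁₂ f x⟩
    
  refine ⟨fun f _ => key f, ?_, ?_⟩
  · -- forward direction
    intro H
    set L : (Fin 3 → ℝ) →L[ℝ] ℝ :=
      (ContinuousLinearMap.proj (R := ℝ) (φ := fun _ : Fin 3 => ℝ) 0) +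
      (ContinuousLinearMap.proj (R := ℝ) (φ := fun _ : Fin 3 => ℝ) 1) with hL
    have hf : ContDiff ℝ (⊤ : ℕ∞) (⇑L) := L.contDiff
    have hpd : ∀ i : Fin 3, pd i (⇑L) 0 = L (Pi.single i 1) := by
      intro i
      simp only [pd, ContinuousLinearMap.fderiv]
    have h0 : pd 0 (⇑L) 0 = 1 := by
      rw [hpd, hL]; simp
    have h1 : pd 1 (⇑L) 0 = 1 := by
      rw [hpd, hL]; simp
    have hQ := H (⇑L) hf 1 2 (by decide) 0
    rw [Qsp12 α₁ α₂ α₃ α₄ α₅ α₆ α₇ α₈ α₉ α₁₀ α₁₁ α₁₂ (⇑L) 0, h0, h1] at hQ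
    simpa [Real.exp_ne_zero, mul_eq_zero] using hQ
  · -- reverse direction
    intro hc f _ a b hab x
    have hcoef : (α₁ - 2 * α₃ - α₄ + 3 * α₅ + 2 * α₆ + α₇) = 0 := hc
    fin_cases a <;> fin_cases b <;> try exact absurd rfl hab
    · exact Qts01 α₁ α₂ α₃ α₄ α₅ α₆ α₇ α₈ α₉ α₁₀ α₁₁ α₁₂ f x
    · exact Qts02 α₁ α₂ α₃ α₄ α₅ α₆ α₇ α₈ α₉ α₁₀ α₁₁ α₁₂ f x
    · exact Qts03 α₁ α₂ α₃ α₄ α₅ α₆ α₇ α₈ α₉ α₁₀ α₁₁ α₁₂ f x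
    · exact Qts10 α₁ α₂ α₃ α₄ α₅ α₆ α₇ α₈ α₉ α₁₀ α₁₁ α₁₂ f x
    · have h := Qsp12 α₁ α₂ α₃ α₄ α₅ α₆ α₇ α₈ α₉ α₁₀ α₁₁ α₁₂ f x
      rw [hcoef, zero_mul, zero_mul] at h
      exact h
    · have h := Qsp13 α₁ α₂ α₃ α₄ α₅ α₆ α₇ α₈ α₉ α₁₀ α₁₁ α₁₂ f x
      rw [hcoef, zero_mul, zero_mul] at h
      exact h
    · exact Qts20 α₁ α₂ α₃ α₄ α₅ α₆ α₇ α₈ α₉ α₁₀ α₁₁ α₁₂ f x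
    · have h := Qsp21 α₁ α₂ α₃ α₄ α₅ α₆ α₇ α₈ α₉ α₁₀ α₁₁ α₁₂ f x
      rw [hcoef, zero_mul, zero_mul] at h
      exact h
    · have h := Qsp23 α₁ α₂ α₃ α₄ α₅ α₆ α₇ α₈ α₉ α₁₀ α₁₁ α₁₂ f x
      rw [hcoef, zero_mul, zero_mul] at h
      exact h
    · exact Qts30 α₁ α₂ α₃ α₄ α₅ α₆ α₇ α₈ α₉ α₁₀ α₁₁ α₁₂ f x
    · have h := Qsp31 α₁ α₂ α₃ α₄ α₅ α₆ α₇ α₈ α₉ α₁₀ α₁₁ α₁₂ f x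
      rw [hcoef, zero_mul, zero_mul] at h
      exact h
    · have h := Qsp32 α₁ α₂ α₃ α₄ α₅ α₆ α₇ α₈ α₉ α₁₀ α₁₁ α₁₂ f x
      rw [hcoef, zero_mul, zero_mul] at h
      exact h
end
end
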